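/- For every r ∈ (0,1) and every ρ > 0, the function H_{r,ρ} is a probability density on [0,∞): ∫_0^∞ H_{r,ρ}(x) dx = 1. -/

import Mathlib

noncomputable def psi (r : ℝ) : ℝ :=
  Real.sqrt (2 / Real.pi) * ∏' n : ℕ, (1 - r ^ (2 * n + 2)) / (1 - r ^ (2 * n + 1))

noncomputable def H (r ρ x : ℝ) : ℝ :=
  (Real.sqrt (2 * ρ / Real.pi) / ∏' n : ℕ, (1 - r ^ (2 * n + 1))) *
    ∑' n : ℕ,
      (r ^ (-(2 * (n : ℤ))) / ∏ k ∈ Finset.Icc 1 n, (1 - r ^ (-(2 * (k : ℤ))))) *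
        Real.exp (-ρ * r ^ (-(2 * (n : ℤ))) * x ^ 2 / 2)

open Filter Finset Topology Real MeasureTheory

/-!
Integrating the series termwise against `∫₀^∞ exp (-b x²) dx = √(π / b) / 2` reduces the claim to
`∑ₙ (-1)ⁿ r^(n²) / (r²; r²)ₙ = ∏ₙ (1 - r^(2n+1))`, which is Euler's identity
`∑ₙ q^(n(n-1)/2) zⁿ / (q; q)ₙ = ∏ₙ (1 + z qⁿ)` at `q = r²`, `z = -r`. Euler's series `f` satisfies
`f z = (1 + z) f (z q)`, so `f z = ∏_{k<N} (1 + z q^k) · f (z q^N)`, and `f (z q^N) → f 0 = 1`.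
-/

section EulerIdentity

def qPochhammer {R : Type*} [CommRing R] (q : R) (n : ℕ) : R := ∏ k ∈ range n, (1 - q ^ (k + 1))

lemma qPochhammer_succ {R : Type*} [CommRing R] (q : R) (n : ℕ) :
    qPochhammer q (n + 1) = qPochhammer q n * (1 - q ^ (n + 1)) :=
  prod_range_succ _ _

def eulerTerm {K : Type*} [Field K] (q z : K) (n : ℕ) : K :=
  q ^ n.choose 2 * z ^ n / qPochhammer q n

variable {𝕜 : Type*} [NormedField 𝕜] {q : 𝕜}

noncomputable def eulerSeries (q z : 𝕜) : 𝕜 := ∑' n, eulerTerm q z n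

lemma norm_sq_lt_one (hq : ‖q‖ < 1) : ‖q ^ 2‖ < 1 := by
  simpa using pow_lt_one₀ (norm_nonneg q) hq two_ne_zero

lemma one_sub_norm_le_norm_one_sub_pow (hq : ‖q‖ ≤ 1) (n : ℕ) :
    1 - ‖q‖ ≤ ‖1 - q ^ (n + 1)‖ := by
  have hpow : ‖q‖ ^ (n + 1) ≤ ‖q‖ := pow_le_of_le_one (norm_nonneg q) hq n.succ_ne_zero
  calc 1 - ‖q‖ ≤ ‖(1 : 𝕜)‖ - ‖q ^ (n + 1)‖ := by rw [norm_one, norm_pow]; linarith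
    _ ≤ ‖1 - q ^ (n + 1)‖ := norm_sub_norm_le _ _

lemma one_sub_pow_succ_ne_zero (hq : ‖q‖ < 1) (n : ℕ) : 1 - q ^ (n + 1) ≠ 0 :=
  norm_pos_iff.mp <| (sub_pos.mpr hq).trans_le (one_sub_norm_le_norm_one_sub_pow hq.le n)

lemma qPochhammer_ne_zero (hq : ‖q‖ < 1) (n : ℕ) : qPochhammer q n ≠ 0 :=
  prod_ne_zero_iff.mpr fun k _ ↦ one_sub_pow_succ_ne_zero hq k

@[simp]
lemma eulerTerm_zero (q z : 𝕜) : eulerTerm q z 0 = 1 := by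
  simp [eulerTerm, qPochhammer]

lemma eulerTerm_succ (hq : ‖q‖ < 1) (z : 𝕜) (n : ℕ) :
    eulerTerm q z (n + 1) = z * q ^ n / (1 - q ^ (n + 1)) * eulerTerm q z n := by
  have hQ := qPochhammer_ne_zero hq n
  have hfactor := one_sub_pow_succ_ne_zero hq n
  simp only [eulerTerm, qPochhammer_succ, Nat.choose_succ_succ', Nat.choose_one_right]
  field_simp
  ring

lemma eulerTerm_succ_eq_add (hq : ‖q‖ < 1) (z : 𝕜) (n : ℕ) :
    eulerTerm q z (n + 1) = eulerTerm q (z * q) (n + 1) + z * eulerTerm q (z * q) n := by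
  have hQ := qPochhammer_ne_zero hq n
  have hfactor := one_sub_pow_succ_ne_zero hq n
  simp only [eulerTerm, qPochhammer_succ, Nat.choose_succ_succ', Nat.choose_one_right]
  field_simp
  ring

lemma eulerTerm_eq_pow_mul (q z : 𝕜) (n : ℕ) : eulerTerm q z n = z ^ n * eulerTerm q 1 n := by
  simp only [eulerTerm, one_pow, mul_one]
  ring

lemma summable_norm_eulerTerm (hq : ‖q‖ < 1) (z : 𝕜) : Summable fun n ↦ ‖eulerTerm q z n‖ := by
  have hratio : Tendsto (fun n : ℕ ↦ ‖z‖ * ‖q‖ ^ n / (1 - ‖q‖)) atTop (𝓝 0) := by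
    simpa using ((tendsto_pow_atTop_nhds_zero_of_lt_one (norm_nonneg q) hq).const_mul ‖z‖).div_const
      (1 - ‖q‖)
  refine summable_of_ratio_norm_eventually_le (one_half_lt_one (α := ℝ)) ?_
  filter_upwards [hratio.eventually (ge_mem_nhds one_half_pos)] with n hn
  rw [norm_norm, norm_norm, eulerTerm_succ hq, norm_mul, norm_div, norm_mul, norm_pow]
  refine mul_le_mul_of_nonneg_right ?_ (norm_nonneg _)
  calc ‖z‖ * ‖q‖ ^ n / ‖1 - q ^ (n + 1)‖ ≤ ‖z‖ * ‖q‖ ^ n / (1 - ‖q‖) := by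
        gcongr; exact one_sub_norm_le_norm_one_sub_pow hq.le n
    _ ≤ 1 / 2 := hn

lemma eulerSeries_zero (q : 𝕜) : eulerSeries q 0 = 1 := by
  rw [eulerSeries, tsum_eq_single 0 fun n hn ↦ by simp [eulerTerm, zero_pow hn], eulerTerm_zero]

lemma summable_norm_mul_pow (hq : ‖q‖ < 1) (z : 𝕜) : Summable fun n ↦ ‖z * q ^ n‖ := by
  simpa [norm_mul, norm_pow] using (summable_geometric_of_lt_one (norm_nonneg q) hq).mul_left ‖z‖

lemma one_add_neg_mul_sq_pow (q : 𝕜) (n : ℕ) : 1 + -q * (q ^ 2) ^ n = 1 - q ^ (2 * n + 1) := by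
  ring

variable [CompleteSpace 𝕜]

lemma summable_eulerTerm (hq : ‖q‖ < 1) (z : 𝕜) : Summable (eulerTerm q z) :=
  (summable_norm_eulerTerm hq z).of_norm

lemma eulerSeries_eq_one_add_mul (hq : ‖q‖ < 1) (z : 𝕜) :
    eulerSeries q z = (1 + z) * eulerSeries q (z * q) := by
  have hs := summable_eulerTerm hq (z * q)
  have hs_succ : Summable fun n ↦ eulerTerm q (z * q) (n + 1) := (summable_nat_add_iff 1).2 hs
  rw [eulerSeries, (summable_eulerTerm hq z).tsum_eq_zero_add,
    tsum_congr (eulerTerm_succ_eq_add hq z), hs_succ.tsum_add (hs.mul_left z), tsum_mul_left, eulerSeries, hs.tsum_eq_zero_add]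
  simp only [eulerTerm_zero]
  ring

lemma tendsto_eulerSeries_nhds_zero (hq : ‖q‖ < 1) : Tendsto (eulerSeries q) (𝓝 0) (𝓝 1) := by
  have hcont : ContinuousOn (eulerSeries q) (Metric.closedBall 0 1) := by
    refine continuousOn_tsum (fun n ↦ Continuous.continuousOn ?_) (summable_norm_eulerTerm hq 1)
      fun n z hz ↦ ?_
    · unfold eulerTerm; fun_prop
    · rw [eulerTerm_eq_pow_mul, norm_mul, norm_pow]
      exact mul_le_of_le_one_left (norm_nonneg _) (pow_le_one₀ (norm_nonneg z) (by simpa using hz))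
  simpa [eulerSeries_zero] using
    (hcont.continuousAt (Metric.closedBall_mem_nhds 0 one_pos)).tendsto

lemma eulerSeries_eq_prod_mul (hq : ‖q‖ < 1) (z : 𝕜) (N : ℕ) :
    eulerSeries q z = (∏ k ∈ range N, (1 + z * q ^ k)) * eulerSeries q (z * q ^ N) := by
  induction N with
  | zero => simp
  | succ N ih => rw [ih, eulerSeries_eq_one_add_mul hq, prod_range_succ, pow_succ, mul_assoc]; ring

theorem hasProd_one_add_mul_pow (hq : ‖q‖ < 1) (z : 𝕜) :
    HasProd (fun n ↦ 1 + z * q ^ n) (eulerSeries q z) := by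
  have hmul : Multipliable fun n ↦ 1 + z * q ^ n :=
    multipliable_one_add_of_summable (summable_norm_mul_pow hq z)
  have htail : Tendsto (fun N ↦ eulerSeries q (z * q ^ N)) atTop (𝓝 1) :=
    (tendsto_eulerSeries_nhds_zero hq).comp
      (by simpa using (tendsto_pow_atTop_nhds_zero_of_norm_lt_one hq).const_mul z)
  have hlim := hmul.hasProd.tendsto_prod_nat.mul htail
  simp only [← eulerSeries_eq_prod_mul hq, mul_one] at hlim
  rw [tendsto_nhds_unique tendsto_const_nhds hlim]
  exact hmul.hasProd

lemma eulerSeries_ne_zero (hq : ‖q‖ < 1) {z : 𝕜} (hz : ∀ n, 1 + z * q ^ n ≠ 0) :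
    eulerSeries q z ≠ 0 := by
  rw [← (hasProd_one_add_mul_pow hq z).tprod_eq]
  exact tprod_one_add_ne_zero_of_summable hz (summable_norm_mul_pow hq z)

lemma hasProd_one_sub_pow_two_mul_add_one (hq : ‖q‖ < 1) :
    HasProd (fun n : ℕ ↦ 1 - q ^ (2 * n + 1)) (eulerSeries (q ^ 2) (-q)) := by
  simpa only [one_add_neg_mul_sq_pow] using hasProd_one_add_mul_pow (norm_sq_lt_one hq) (-q)

lemma eulerSeries_sq_neg_ne_zero (hq : ‖q‖ < 1) : eulerSeries (q ^ 2) (-q) ≠ 0 :=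
  eulerSeries_ne_zero (norm_sq_lt_one hq) fun n ↦ by
    simpa only [one_add_neg_mul_sq_pow] using one_sub_pow_succ_ne_zero hq (2 * n)

end EulerIdentity

section DensityCoefficients

variable {K : Type*} [Field K]

def densityCoeff (r : K) (n : ℕ) : K :=
  r ^ (-(2 * (n : ℤ))) / ∏ k ∈ Icc 1 n, (1 - r ^ (-(2 * (k : ℤ))))

lemma zpow_neg_two_mul (r : K) (k : ℕ) : r ^ (-(2 * (k : ℤ))) = ((r ^ 2) ^ k)⁻¹ := by
  rw [zpow_neg, zpow_mul, zpow_ofNat, zpow_natCast]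

lemma prod_Icc_one_sub_inv_pow {s : K} (hs : s ≠ 0) (n : ℕ) :
    ∏ k ∈ Icc 1 n, (1 - (s ^ k)⁻¹) = (-1) ^ n * qPochhammer s n / s ^ (n + 1).choose 2 := by
  induction n with
  | zero => simp [qPochhammer]
  | succ n ih =>
    rw [prod_Icc_succ_top (by omega), ih, qPochhammer_succ,
      Nat.choose_succ_succ' (n + 1), Nat.choose_one_right]
    field_simp
    ring

lemma densityCoeff_mul_pow {r : K} (hr : r ≠ 0) (n : ℕ) :
    densityCoeff r n * r ^ n = eulerTerm (r ^ 2) (-r) n := by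
  simp only [densityCoeff, eulerTerm, zpow_neg_two_mul, prod_Icc_one_sub_inv_pow (pow_ne_zero 2 hr),
    Nat.choose_succ_succ' n, Nat.choose_one_right]
  rw [neg_pow r n]
  field_simp
  rw [← pow_mul (-1 : K) n 2, (even_two.mul_left n).neg_one_pow]
  ring

end DensityCoefficients

theorem integral_Ioi_tsum_mul_exp_neg_mul_sq {c b : ℕ → ℝ} (hb : ∀ n, 0 < b n)
    (hs : Summable fun n ↦ |c n| * √(π / b n)) :
    ∫ x in Set.Ioi 0, ∑' n, c n * exp (-b n * x ^ 2) = ∑' n, c n * √(π / b n) / 2 := by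
  have hint (n : ℕ) : IntegrableOn (fun x ↦ c n * exp (-b n * x ^ 2)) (Set.Ioi 0) :=
    (integrable_exp_neg_mul_sq (hb n)).integrableOn.const_mul _
  have hnorm (n : ℕ) : ∫ x in Set.Ioi 0, ‖c n * exp (-b n * x ^ 2)‖ = |c n| * √(π / b n) / 2 := by
    simp only [norm_mul, norm_eq_abs, abs_exp]
    rw [integral_const_mul, integral_gaussian_Ioi, mul_div_assoc]
  rw [← integral_tsum_of_summable_integral_norm hint (by simpa only [hnorm] using hs.div_const 2)]
  refine tsum_congr fun n ↦ ?_
  rw [integral_const_mul, integral_gaussian_Ioi, mul_div_assoc]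

section Density

variable {r ρ : ℝ}

lemma sqrt_pi_div_mul_zpow_neg (hr : 0 < r) (hρ : 0 < ρ) (n : ℕ) :
    √(π / (ρ * r ^ (-(2 * (n : ℤ))) / 2)) = √(2 * π / ρ) * r ^ n := by
  have hrate : π / (ρ * r ^ (-(2 * (n : ℤ))) / 2) = 2 * π / ρ * (r ^ n) ^ 2 := by
    rw [zpow_neg_two_mul, ← pow_mul, ← pow_mul, mul_comm n 2]
    field_simp
  rw [hrate, sqrt_mul (by positivity), sqrt_sq (by positivity)]

lemma densityCoeff_mul_sqrt (hr : 0 < r) (hρ : 0 < ρ) (n : ℕ) :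
    densityCoeff r n * √(π / (ρ * r ^ (-(2 * (n : ℤ))) / 2)) =
      √(2 * π / ρ) * eulerTerm (r ^ 2) (-r) n := by
  rw [sqrt_pi_div_mul_zpow_neg hr hρ, ← densityCoeff_mul_pow hr.ne']
  ring

lemma summable_abs_densityCoeff_mul_sqrt (hr0 : 0 < r) (hr1 : r < 1) (hρ : 0 < ρ) :
    Summable fun n ↦ |densityCoeff r n| * √(π / (ρ * r ^ (-(2 * (n : ℤ))) / 2)) := by
  have hq : ‖r ^ 2‖ < 1 := norm_sq_lt_one (by rwa [norm_of_nonneg hr0.le])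
  refine ((summable_norm_eulerTerm hq (-r)).mul_left √(2 * π / ρ)).congr fun n ↦ ?_
  rw [← abs_of_nonneg (sqrt_nonneg (π / _)), ← abs_mul, densityCoeff_mul_sqrt hr0 hρ, abs_mul,
    abs_of_nonneg (sqrt_nonneg _), norm_eq_abs]

end Density

lemma H_eq (r ρ x : ℝ) : H r ρ x = (√(2 * ρ / π) / ∏' n : ℕ, (1 - r ^ (2 * n + 1))) *
    ∑' n, densityCoeff r n * exp (-(ρ * r ^ (-(2 * (n : ℤ))) / 2) * x ^ 2) := by
  simp only [H, densityCoeff]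
  congr! 5
  ring

theorem stmt2 (r ρ : ℝ) (hr0 : 0 < r) (hr1 : r < 1) (hρ : 0 < ρ) :
    ∫ x in Set.Ioi (0 : ℝ), H r ρ x = 1 := by
  have hr : ‖r‖ < 1 := by rwa [norm_of_nonneg hr0.le]
  have hb (n : ℕ) : 0 < ρ * r ^ (-(2 * (n : ℤ))) / 2 := by positivity
  have hsqrt : √(2 * ρ / π) * √(2 * π / ρ) = 2 := by
    rw [← sqrt_mul (by positivity), show 2 * ρ / π * (2 * π / ρ) = 2 ^ 2 by field_simp,
      sqrt_sq zero_le_two]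
  simp only [H_eq, (hasProd_one_sub_pow_two_mul_add_one hr).tprod_eq]
  rw [integral_const_mul,
    integral_Ioi_tsum_mul_exp_neg_mul_sq hb (summable_abs_densityCoeff_mul_sqrt hr0 hr1 hρ),
    tsum_congr fun n ↦ congrArg (· / 2) (densityCoeff_mul_sqrt hr0 hρ n), tsum_div_const,
    tsum_mul_left, ← eulerSeries]
  field_simp [eulerSeries_sq_neg_ne_zero hr]
  linear_combination hsqrt
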